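/- Let (φ_i)_{i≥0} be elements of the dual of a Banach space satisfying ‖Σ_{i=0}^∞ β_i φ_i‖ = Σ_{i=0}^∞ |β_i| for every absolutely summable real sequence (β_i). Then the shift map T defined on C = { Σ_{i=0}^∞ α_i φ_i : α_i ≥ 0, Σ α_i = 1 } by T(Σ α_i φ_i) = Σ α_i φ_{i+1} is well defined, maps C to C, is an isometry (distance preserving), and has no fixed point in C. -/

import Mathlib

/-!
Since `β ↦ Σ βᵢ φᵢ` is an isometric embedding of `ℓ¹`, an element of `C` determines its
coefficients, and so does its image under the shift; in coefficients the shift is the right shift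
`(α₀, α₁, …) ↦ (0, α₀, α₁, …)` of `ℓ¹`, which preserves positivity, total mass and `ℓ¹`-distances.
A fixed point would have coefficients with `α₀ = 0` and `αᵢ₊₁ = αᵢ`, i.e. `α = 0`, contradicting
`Σ αᵢ = 1`.
-/

open NormedSpace Set

variable {A : Type*} [NormedAddCommGroup A] [NormedSpace ℝ A]

/-- The set `C = { Σ α_i φ_i : α_i ≥ 0, Σ α_i = 1 }` of infinite convex combinations. -/
def simplexCombinations (φ : ℕ → StrongDual ℝ A) : Set (StrongDual ℝ A) :=
  {f | ∃ α : ℕ → ℝ, (∀ i, 0 ≤ α i) ∧ Summable α ∧ (∑' i, α i) = 1 ∧ f = ∑' i, α i • φ i}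

noncomputable section

def shiftRight {M : Type*} [Zero M] (β : ℕ → M) : ℕ → M
  | 0 => 0
  | n + 1 => β n

section shiftRight

variable {M : Type*} [AddCommGroup M] {β : ℕ → M}

@[simp] lemma shiftRight_zero : shiftRight β 0 = 0 := rfl

@[simp] lemma shiftRight_succ (n : ℕ) : shiftRight β (n + 1) = β n := rfl

lemma eq_zero_of_shiftRight_eq_self (h : shiftRight β = β) : β = 0 := by
  funext n
  induction n with
  | zero => exact (congrFun h 0).symm
  | succ n ih => rw [← congrFun h (n + 1), shiftRight_succ, ih, Pi.zero_apply, Pi.zero_apply]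

variable [TopologicalSpace M] [IsTopologicalAddGroup M]

lemma summable_shiftRight_iff : Summable (shiftRight β) ↔ Summable β :=
  (summable_nat_add_iff 1).symm

lemma tsum_shiftRight [T2Space M] (hβ : Summable β) : ∑' n, shiftRight β n = ∑' n, β n := by
  rw [tsum_eq_zero_add' hβ, shiftRight_zero, zero_add]
  rfl

end shiftRight

variable {E : Type*} [NormedAddCommGroup E] [NormedSpace ℝ E]

def IsL1Isometric (φ : ℕ → E) : Prop :=
  ∀ β : ℕ → ℝ, Summable (fun i => |β i|) → ‖∑' i, β i • φ i‖ = ∑' i, |β i|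

open Classical in
/-- `Σ αᵢ φᵢ ↦ Σ αᵢ φᵢ₊₁` for a chosen coefficient sequence `α`, and `0` off the image of `ℓ¹`. -/
def shiftMap (φ : ℕ → E) (f : E) : E :=
  if h : ∃ α : ℕ → ℝ, Summable α ∧ f = ∑' i, α i • φ i then ∑' i, h.choose i • φ (i + 1) else 0

namespace IsL1Isometric

variable {φ : ℕ → E} (hφ : IsL1Isometric φ) {α β : ℕ → ℝ}
include hφ

lemma norm_tsum_smul (hβ : Summable β) : ‖∑' i, β i • φ i‖ = ∑' i, |β i| :=
  hφ β (summable_abs_iff.mpr hβ)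

lemma norm_eq_one (i : ℕ) : ‖φ i‖ = 1 := by
  classical
  have hsingle := hφ (fun j => if j = i then 1 else 0)
    (by simpa [apply_ite] using summable_of_ne_finset_zero (s := {i}) (by simp_all))
  simpa [ite_smul, apply_ite, tsum_ite_eq] using hsingle

variable [CompleteSpace E]

lemma summable_smul (hβ : Summable β) : Summable fun i => β i • φ i :=
  .of_norm_bounded (summable_abs_iff.mpr hβ) fun i => by
    rw [norm_smul, hφ.norm_eq_one, mul_one, Real.norm_eq_abs]

lemma tsum_smul_sub_tsum_smul (hα : Summable α) (hβ : Summable β) :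
    ∑' i, α i • φ i - ∑' i, β i • φ i = ∑' i, (α i - β i) • φ i := by
  simp_rw [sub_smul]
  exact ((hφ.summable_smul hα).tsum_sub (hφ.summable_smul hβ)).symm

lemma norm_tsum_smul_sub_tsum_smul (hα : Summable α) (hβ : Summable β) :
    ‖∑' i, α i • φ i - ∑' i, β i • φ i‖ = ∑' i, |α i - β i| := by
  rw [hφ.tsum_smul_sub_tsum_smul hα hβ, hφ.norm_tsum_smul (hα.sub hβ)]

lemma eq_of_tsum_smul_eq (hα : Summable α) (hβ : Summable β)
    (h : ∑' i, α i • φ i = ∑' i, β i • φ i) : α = β := by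
  have hdist := hφ.norm_tsum_smul_sub_tsum_smul hα hβ
  rw [h, sub_self, norm_zero] at hdist
  have habs : HasSum (fun i => |α i - β i|) 0 :=
    hdist ▸ (summable_abs_iff.mpr (hα.sub hβ)).hasSum
  funext i
  simpa [sub_eq_zero] using congrFun ((hasSum_zero_iff_of_nonneg fun _ => abs_nonneg _).mp habs) i

lemma tsum_smul_succ (hβ : Summable β) :
    ∑' i, β i • φ (i + 1) = ∑' n, shiftRight β n • φ n := by
  rw [(hφ.summable_smul (summable_shiftRight_iff.mpr hβ)).tsum_eq_zero_add]
  simp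

lemma succ : IsL1Isometric fun i => φ (i + 1) := fun β hβ => by
  have hβ' := summable_abs_iff.mp hβ
  rw [hφ.tsum_smul_succ hβ', hφ.norm_tsum_smul (summable_shiftRight_iff.mpr hβ'),
    tsum_eq_zero_add' (f := fun n => |shiftRight β n|) hβ]
  simp

lemma shiftMap_tsum_smul (hα : Summable α) :
    shiftMap φ (∑' i, α i • φ i) = ∑' i, α i • φ (i + 1) := by
  have h : ∃ α' : ℕ → ℝ, Summable α' ∧ ∑' i, α i • φ i = ∑' i, α' i • φ i := ⟨α, hα, rfl⟩
  obtain ⟨hα', hrepr⟩ := h.choose_spec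
  rw [shiftMap, dif_pos h, hφ.eq_of_tsum_smul_eq hα' hα hrepr.symm]

lemma norm_shiftMap_sub_shiftMap (hα : Summable α) (hβ : Summable β) :
    ‖shiftMap φ (∑' i, α i • φ i) - shiftMap φ (∑' i, β i • φ i)‖ =
      ‖∑' i, α i • φ i - ∑' i, β i • φ i‖ := by
  rw [hφ.shiftMap_tsum_smul hα, hφ.shiftMap_tsum_smul hβ,
    hφ.succ.norm_tsum_smul_sub_tsum_smul hα hβ, hφ.norm_tsum_smul_sub_tsum_smul hα hβ]

lemma shiftMap_ne_self (hα : Summable α) (hα0 : α ≠ 0) :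
    shiftMap φ (∑' i, α i • φ i) ≠ ∑' i, α i • φ i := fun hfix => by
  rw [hφ.shiftMap_tsum_smul hα, hφ.tsum_smul_succ hα] at hfix
  exact hα0 (eq_zero_of_shiftRight_eq_self
    (hφ.eq_of_tsum_smul_eq (summable_shiftRight_iff.mpr hα) hα hfix))

end IsL1Isometric

end

theorem shift_map_isometry_no_fixed_point_general
    (A : Type*) [NormedAddCommGroup A] [NormedSpace ℝ A]
    (φ : ℕ → StrongDual ℝ A)
    (hiso : ∀ β : ℕ → ℝ, Summable (fun i => |β i|) →
      ‖∑' i, β i • φ i‖ = ∑' i, |β i|) :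
    ∃ T : StrongDual ℝ A → StrongDual ℝ A,
      (∀ α : ℕ → ℝ, (∀ i, 0 ≤ α i) → Summable α → (∑' i, α i) = 1 →
        T (∑' i, α i • φ i) = ∑' i, α i • φ (i + 1)) ∧
      MapsTo T (simplexCombinations φ) (simplexCombinations φ) ∧
      (∀ f ∈ simplexCombinations φ, ∀ g ∈ simplexCombinations φ, ‖T f - T g‖ = ‖f - g‖) ∧
      ∀ f ∈ simplexCombinations φ, T f ≠ f := by
  have hφ : IsL1Isometric φ := hiso
  refine ⟨shiftMap φ, fun α _ hα _ => hφ.shiftMap_tsum_smul hα, ?_, ?_, ?_⟩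
  · rintro _ ⟨α, hα0, hα, hα1, rfl⟩
    refine ⟨shiftRight α, fun n => ?_, summable_shiftRight_iff.mpr hα,
      (tsum_shiftRight hα).trans hα1, ?_⟩
    · cases n <;> simp [hα0]
    · rw [hφ.shiftMap_tsum_smul hα, hφ.tsum_smul_succ hα]
  · rintro _ ⟨α, -, hα, -, rfl⟩ _ ⟨β, -, hβ, -, rfl⟩
    exact hφ.norm_shiftMap_sub_shiftMap hα hβ
  · rintro _ ⟨α, -, hα, hα1, rfl⟩
    refine hφ.shiftMap_ne_self hα fun hα0 => ?_
    simp [hα0] at hα1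

/-- Given functionals `(φ_i)` in the dual of a Banach space spanning `ℓ¹` isometrically, the
shift map `T (Σ α_i φ_i) = Σ α_i φ_{i+1}` on the set
`C = { Σ α_i φ_i : α_i ≥ 0, Σ α_i = 1 }` is well defined, maps `C` into `C`, is distance
preserving on `C`, and has no fixed point in `C`. -/
theorem shift_map_isometry_no_fixed_point
    (A : Type*) [NormedAddCommGroup A] [NormedSpace ℝ A] [CompleteSpace A]
    (φ : ℕ → StrongDual ℝ A)
    (hiso : ∀ β : ℕ → ℝ, Summable (fun i => |β i|) →
      ‖∑' i, β i • φ i‖ = ∑' i, |β i|) :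
    ∃ T : StrongDual ℝ A → StrongDual ℝ A,
      (∀ α : ℕ → ℝ, (∀ i, 0 ≤ α i) → Summable α → (∑' i, α i) = 1 →
        T (∑' i, α i • φ i) = ∑' i, α i • φ (i + 1)) ∧
      MapsTo T (simplexCombinations φ) (simplexCombinations φ) ∧
      (∀ f ∈ simplexCombinations φ, ∀ g ∈ simplexCombinations φ, ‖T f - T g‖ = ‖f - g‖) ∧
      ∀ f ∈ simplexCombinations φ, T f ≠ f :=
  shift_map_isometry_no_fixed_point_general A φ hiso
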